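/- arXiv:1408.0124 — 8 statements merged into one kernel-verified Lean document; each statement's English description precedes it below -/
import Mathlib

section
/- For every ρ ∈ (0,1) and every S > 0, W_G(ρ) < W_M(ρ); that is, when all customers are high priority (ρ_{1H} = ρ), the gated system yields a strictly smaller mean low-priority waiting time than the mixed gated/exhaustive system. -/
/-- Gated mean low-priority waiting time, as a function of the
high-priority occupation rate `x`, with total occupation rate `ρ`
and deterministic vacation length `S`. -/
noncomputable def WG (ρ S x : ℝ) : ℝ :=
  (1 + ρ + x) * (S / (2 * (1 - ρ)) + ρ / (1 - ρ ^ 2))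

/-- Mixed gated/exhaustive mean low-priority waiting time, as a function
of the high-priority occupation rate `x`. -/
noncomputable def WM (ρ S x : ℝ) : ℝ :=
  ρ / ((1 - ρ) * (1 - x)) + S * (1 + ρ * (1 - 2 * x)) / (2 * (1 - ρ) * (1 - x))

/-- at x = ρ the gated system yields a strictly smaller mean
low-priority waiting time than the mixed gated/exhaustive system. -/
theorem WG_lt_WM_at_rho (ρ S : ℝ) (hρ0 : 0 < ρ) (hρ1 : ρ < 1) (hS : 0 < S) :
    WG ρ S ρ < WM ρ S ρ := by
  have h1 : (0:ℝ) < 1 - ρ := by linarith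
  have h2 : (0:ℝ) < 1 + ρ := by linarith
  have hsq : (1:ℝ) - ρ ^ 2 = (1 - ρ) * (1 + ρ) := by ring
  unfold WG WM
  rw [hsq, div_add_div _ _ (by positivity) (by positivity),
      div_add_div _ _ (by positivity) (by positivity)]
  rw [mul_div_assoc', div_lt_div_iff₀ (by positivity) (by positivity)]
  nlinarith [mul_pos hρ0 hρ0, mul_pos (mul_pos hρ0 hρ0) hρ0, sq_nonneg ρ,
    mul_pos hS (mul_pos hρ0 hρ0), mul_pos h1 h2, mul_pos hS hρ0,
    mul_pos (mul_pos hS hρ0) (mul_pos h1 h1), mul_pos (mul_pos hρ0 hρ0) (mul_pos h1 h1)]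
end

section
/- The first derivative of W_M with respect to x is strictly positive at every x ∈ [0,ρ]; in particular W_M is strictly increasing on [0,ρ]. -/
/-!
Away from `x = 1`, the numerator `1 + ρ(1 - 2x)` splits as `(1 - ρ) + 2ρ(1 - x)`, so
`W_M(x) = (ρ/(1-ρ) + S/2) / (1 - x) + ρS/(1-ρ)`: a positive multiple of `1/(1 - x)` plus a
constant, whose derivative `(ρ/(1-ρ) + S/2) / (1 - x)²` is positive on all of `x < 1`.
-/

lemma WM_eq {ρ x : ℝ} (S : ℝ) (hρ : ρ ≠ 1) (hx : x ≠ 1) :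
    WM ρ S x = (ρ / (1 - ρ) + S / 2) * (1 - x)⁻¹ + ρ * S / (1 - ρ) := by
  have hρ' : 1 - ρ ≠ 0 := sub_ne_zero.mpr hρ.symm
  have hx' : 1 - x ≠ 0 := sub_ne_zero.mpr hx.symm
  unfold WM
  field_simp
  ring

lemma hasDerivAt_WM {ρ x : ℝ} (S : ℝ) (hρ : ρ ≠ 1) (hx : x ≠ 1) :
    HasDerivAt (WM ρ S) ((ρ / (1 - ρ) + S / 2) / (1 - x) ^ 2) x := by
  have hx' : 1 - x ≠ 0 := sub_ne_zero.mpr hx.symm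
  have hinv : HasDerivAt (fun y : ℝ => (1 - y)⁻¹) (-(-1) / (1 - x) ^ 2) x :=
    ((hasDerivAt_id x).const_sub 1).inv hx'
  have hWM : WM ρ S =ᶠ[nhds x] fun y => (ρ / (1 - ρ) + S / 2) * (1 - y)⁻¹ + ρ * S / (1 - ρ) :=
    Filter.mem_of_superset (isOpen_ne.mem_nhds hx) fun y hy => WM_eq S hρ hy
  refine ((hinv.const_mul _).add_const _).congr_of_eventuallyEq hWM |>.congr_deriv ?_
  field_simp

lemma deriv_WM_pos_of_lt_one {ρ S x : ℝ} (hρ0 : 0 ≤ ρ) (hρ1 : ρ < 1) (hS : 0 < S) (hx : x < 1) :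
    0 < deriv (WM ρ S) x := by
  rw [(hasDerivAt_WM S hρ1.ne hx.ne).deriv]
  have : 0 < 1 - ρ := sub_pos.mpr hρ1
  have : 0 < 1 - x := sub_pos.mpr hx
  positivity

lemma strictMonoOn_WM {ρ S : ℝ} (hρ0 : 0 ≤ ρ) (hρ1 : ρ < 1) (hS : 0 < S) :
    StrictMonoOn (WM ρ S) (Set.Iio 1) := by
  refine strictMonoOn_of_deriv_pos (convex_Iio 1) ?_ fun x hx => ?_
  · exact fun x hx => (hasDerivAt_WM S hρ1.ne (ne_of_lt hx)).continuousAt.continuousWithinAt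
  · rw [interior_Iio] at hx
    exact deriv_WM_pos_of_lt_one hρ0 hρ1 hS hx

/-- the first derivative of W_M is strictly positive at every
x ∈ [0,ρ]; in particular W_M is strictly increasing on [0,ρ]. -/
theorem deriv_WM_pos (ρ S : ℝ) (hρ0 : 0 < ρ) (hρ1 : ρ < 1) (hS : 0 < S) :
    (∀ x ∈ Set.Icc (0 : ℝ) ρ, 0 < deriv (WM ρ S) x) ∧
    StrictMonoOn (WM ρ S) (Set.Icc (0 : ℝ) ρ) := by
  have hIcc : Set.Icc (0 : ℝ) ρ ⊆ Set.Iio 1 := fun x hx => hx.2.trans_lt hρ1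
  exact ⟨fun x hx => deriv_WM_pos_of_lt_one hρ0.le hρ1 hS (hIcc hx),
    (strictMonoOn_WM hρ0.le hρ1 hS).mono hIcc⟩
end

section
/- The derivative of W_M at x = 0 equals (ρ + S(1−ρ)/2)/(1−ρ), and this derivative is strictly smaller than the (constant) derivative S/(2(1−ρ)) + ρ/(1−ρ²) of W_G if and only if S > 2ρ/(1+ρ). Hence the mean waiting time of a low-priority customer in a mixed gated/exhaustive system is less than in a purely gated system for small ρ_{1H} if and only if S > 2ρ/(1+ρ). -/
/-- the derivative of W_M at 0 equals (ρ + S(1−ρ)/2)/(1−ρ), and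
it is strictly smaller than the constant derivative S/(2(1−ρ)) + ρ/(1−ρ²) of
W_G if and only if S > 2ρ/(1+ρ). -/
theorem deriv_WM_zero (ρ S : ℝ) (hρ0 : 0 < ρ) (hρ1 : ρ < 1) (hS : 0 < S) :
    deriv (WM ρ S) 0 = (ρ + S * (1 - ρ) / 2) / (1 - ρ) ∧
    (deriv (WM ρ S) 0 < S / (2 * (1 - ρ)) + ρ / (1 - ρ ^ 2) ↔
      S > 2 * ρ / (1 + ρ)) := by
  have hρ1' : (0:ℝ) < 1 - ρ := by linarith
  have h1 : HasDerivAt (fun x : ℝ => 1 - x) (-1) 0 := by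
    simpa using (hasDerivAt_id (0:ℝ)).const_sub 1
  have hden : HasDerivAt (fun x : ℝ => (1 - ρ) * (1 - x)) ((1 - ρ) * (-1)) 0 :=
    h1.const_mul _
  have hdne : (1 - ρ) * (1 - (0:ℝ)) ≠ 0 := by
    simp; linarith
  have hA : HasDerivAt (fun x : ℝ => ρ / ((1 - ρ) * (1 - x)))
      ((0 * ((1 - ρ) * (1 - 0)) - ρ * ((1 - ρ) * (-1))) / ((1 - ρ) * (1 - 0)) ^ 2) 0 :=
    (hasDerivAt_const 0 ρ).div hden hdne
  have hnum : HasDerivAt (fun x : ℝ => S * (1 + ρ * (1 - 2 * x))) (S * (ρ * (-2))) 0 := by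
    have h2x : HasDerivAt (fun x : ℝ => 2 * x) 2 0 := by
      simpa using (hasDerivAt_id (0:ℝ)).const_mul 2
    have : HasDerivAt (fun x : ℝ => 1 - 2 * x) (-2) 0 := by
      simpa using h2x.const_sub 1
    have := ((this.const_mul ρ).const_add 1).const_mul S
    simpa using this
  have hden2 : HasDerivAt (fun x : ℝ => 2 * (1 - ρ) * (1 - x)) (2 * (1 - ρ) * (-1)) 0 :=
    h1.const_mul _
  have hdne2 : 2 * (1 - ρ) * (1 - (0:ℝ)) ≠ 0 := by
    simp; linarith
  have hB : HasDerivAt (fun x : ℝ => S * (1 + ρ * (1 - 2 * x)) / (2 * (1 - ρ) * (1 - x)))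
      ((S * (ρ * (-2)) * (2 * (1 - ρ) * (1 - 0)) -
        S * (1 + ρ * (1 - 2 * 0)) * (2 * (1 - ρ) * (-1))) / (2 * (1 - ρ) * (1 - 0)) ^ 2) 0 :=
    hnum.div hden2 hdne2
  have hWM : HasDerivAt (WM ρ S)
      ((0 * ((1 - ρ) * (1 - 0)) - ρ * ((1 - ρ) * (-1))) / ((1 - ρ) * (1 - 0)) ^ 2 +
       (S * (ρ * (-2)) * (2 * (1 - ρ) * (1 - 0)) -
        S * (1 + ρ * (1 - 2 * 0)) * (2 * (1 - ρ) * (-1))) / (2 * (1 - ρ) * (1 - 0)) ^ 2) 0 :=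
    hA.add hB
  have hd : deriv (WM ρ S) 0 = (ρ + S * (1 - ρ) / 2) / (1 - ρ) := by
    rw [hWM.deriv]
    field_simp
    ring
  refine ⟨hd, ?_⟩
  rw [hd]
  have hρ1p : (0:ℝ) < 1 + ρ := by linarith
  have hden3 : (0:ℝ) < 2 * (1 - ρ) * (1 + ρ) := by positivity
  have key : S / (2 * (1 - ρ)) + ρ / (1 - ρ ^ 2) - (ρ + S * (1 - ρ) / 2) / (1 - ρ)
      = (ρ * (S * (1 + ρ) - 2 * ρ)) / (2 * (1 - ρ) * (1 + ρ)) := by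
    have h2 : (1:ℝ) - ρ ^ 2 ≠ 0 := by nlinarith
    field_simp
    ring
  rw [← sub_pos, key, gt_iff_lt, div_lt_iff₀ hρ1p, lt_div_iff₀ hden3, zero_mul]
  constructor
  · intro h; nlinarith
  · intro h; nlinarith
end

section
/- For every x ∈ [0,ρ] the exact factorization W_M(x) − W_G(x) = (S + 2ρ/(1+ρ)) · x · (x − λ*) / (2(1−ρ)(1−x)) holds, where λ* = ρ·(S − 2ρ/(1+ρ))/(S + 2ρ/(1+ρ)); in particular the sign of W_M(x) − W_G(x) equals the sign of x(x − λ*). -/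
/-- exact factorization of W_M(x) − W_G(x). -/
theorem WM_sub_WG_factorization (ρ S : ℝ) (hρ0 : 0 < ρ) (hρ1 : ρ < 1) (hS : 0 < S) :
    ∀ x ∈ Set.Icc (0 : ℝ) ρ,
      WM ρ S x - WG ρ S x =
        (S + 2 * ρ / (1 + ρ)) * x *
          (x - ρ * (S - 2 * ρ / (1 + ρ)) / (S + 2 * ρ / (1 + ρ))) /
          (2 * (1 - ρ) * (1 - x)) := by
  intro x hx
  obtain ⟨hx0, hxρ⟩ := hx
  have h1 : (1 : ℝ) - ρ ≠ 0 := by linarith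
  have h2 : (1 : ℝ) + ρ ≠ 0 := by linarith
  have h3 : (1 : ℝ) - x ≠ 0 := by nlinarith
  have h4 : (1 : ℝ) - ρ ^ 2 ≠ 0 := by nlinarith
  have h5 : S + 2 * ρ / (1 + ρ) ≠ 0 := by positivity
  unfold WM WG
  field_simp
  ring
end

section
/- If S > 2ρ/(1+ρ), then λ* = ρ·(S − 2ρ/(1+ρ))/(S + 2ρ/(1+ρ)) satisfies 0 < λ* < ρ, and the two systems perform the same at λ*: W_M(λ*) = W_G(λ*). -/
lemma WM_eq_WG_of_root (ρ S x : ℝ) (h1mρ : (1:ℝ) - ρ ≠ 0) (h1ρ : (1:ℝ) + ρ ≠ 0)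
    (hx : (1:ℝ) - x ≠ 0)
    (heq : x * (S * (1 + ρ) + 2 * ρ) = ρ * (S * (1 + ρ) - 2 * ρ)) :
    WM ρ S x = WG ρ S x := by
  have hρ2 : (1:ℝ) - ρ ^ 2 ≠ 0 := by
    intro hc
    rcases mul_eq_zero.1 (show (1-ρ)*(1+ρ) = 0 by nlinarith) with h|h <;> contradiction
  have hdiff : WM ρ S x - WG ρ S x =
      x * (x * (S * (1 + ρ) + 2 * ρ) - ρ * (S * (1 + ρ) - 2 * ρ)) /
        (2 * (1 - ρ ^ 2) * (1 - x)) := by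
    unfold WM WG
    field_simp
    ring
  have h0 : x * (S * (1 + ρ) + 2 * ρ) - ρ * (S * (1 + ρ) - 2 * ρ) = 0 := by linarith
  rw [h0, mul_zero, zero_div] at hdiff
  linarith

/-- if S > 2ρ/(1+ρ) then 0 < λ* < ρ and W_M(λ*) = W_G(λ*). -/
theorem lambda_star_crossing (ρ S : ℝ) (hρ0 : 0 < ρ) (hρ1 : ρ < 1) (hS : 0 < S)
    (h : S > 2 * ρ / (1 + ρ)) :
    0 < ρ * (S - 2 * ρ / (1 + ρ)) / (S + 2 * ρ / (1 + ρ)) ∧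
    ρ * (S - 2 * ρ / (1 + ρ)) / (S + 2 * ρ / (1 + ρ)) < ρ ∧
    WM ρ S (ρ * (S - 2 * ρ / (1 + ρ)) / (S + 2 * ρ / (1 + ρ))) =
      WG ρ S (ρ * (S - 2 * ρ / (1 + ρ)) / (S + 2 * ρ / (1 + ρ))) := by
  have h1ρ : (0:ℝ) < 1 + ρ := by linarith
  have ha : 0 < 2 * ρ / (1 + ρ) := by positivity
  have hnum : 0 < S - 2 * ρ / (1 + ρ) := by linarith
  have hden : 0 < S + 2 * ρ / (1 + ρ) := by linarith
  have hpos : 0 < ρ * (S - 2 * ρ / (1 + ρ)) / (S + 2 * ρ / (1 + ρ)) := by positivity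
  have hlt : ρ * (S - 2 * ρ / (1 + ρ)) / (S + 2 * ρ / (1 + ρ)) < ρ := by
    rw [div_lt_iff₀ hden]
    nlinarith
  refine ⟨hpos, hlt, ?_⟩
  have heq : (ρ * (S - 2 * ρ / (1 + ρ)) / (S + 2 * ρ / (1 + ρ))) * (S * (1 + ρ) + 2 * ρ)
      = ρ * (S * (1 + ρ) - 2 * ρ) := by
    field_simp
  exact WM_eq_WG_of_root ρ S _ (by linarith) (by linarith) (by nlinarith) heq
end

section
/- If S > 2ρ/(1+ρ), then for every x with 0 < x < λ* one has W_M(x) < W_G(x): the mixed gated/exhaustive system yields strictly smaller mean low-priority waiting time than the gated system whenever the high-priority occupation rate lies strictly between 0 and λ*. -/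
/-- if S > 2ρ/(1+ρ), then W_M(x) < W_G(x) for all 0 < x < λ*. -/
theorem WM_lt_WG_below_lambda_star (ρ S : ℝ) (hρ0 : 0 < ρ) (hρ1 : ρ < 1) (hS : 0 < S)
    (h : S > 2 * ρ / (1 + ρ)) :
    ∀ x : ℝ, 0 < x → x < ρ * (S - 2 * ρ / (1 + ρ)) / (S + 2 * ρ / (1 + ρ)) →
      WM ρ S x < WG ρ S x := by
  intro x hx0 hxl
  have h1ρ : (0:ℝ) < 1 + ρ := by linarith
  have h1mρ : (0:ℝ) < 1 - ρ := by linarith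
  have ha : 0 < 2 * ρ / (1 + ρ) := by positivity
  have hden : 0 < S + 2 * ρ / (1 + ρ) := by linarith
  -- key cleared inequality
  have hx' : x * (S + 2 * ρ / (1 + ρ)) < ρ * (S - 2 * ρ / (1 + ρ)) :=
    (lt_div_iff₀ hden).mp hxl
  have hkey : x * (S * (1 + ρ) + 2 * ρ) < ρ * (S * (1 + ρ) - 2 * ρ) := by
    have := mul_lt_mul_of_pos_right hx' h1ρ
    have ha2 : 2 * ρ / (1 + ρ) * (1 + ρ) = 2 * ρ := by field_simp
    nlinarith [this]
  have hxρ : x < ρ := by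
    have : ρ * (S - 2 * ρ / (1 + ρ)) < ρ * (S + 2 * ρ / (1 + ρ)) := by nlinarith
    calc x < ρ * (S - 2 * ρ / (1 + ρ)) / (S + 2 * ρ / (1 + ρ)) := hxl
      _ < ρ := by rw [div_lt_iff₀ hden]; nlinarith
  have h1mx : (0:ℝ) < 1 - x := by linarith
  unfold WM WG
  rw [show (1:ℝ) - ρ ^ 2 = (1 - ρ) * (1 + ρ) by ring]
  rw [div_add_div _ _ (by positivity) (by positivity),
    div_add_div _ _ (by positivity) (by positivity),
    mul_div_assoc',
    div_lt_div_iff₀ (by positivity) (by positivity)]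
  have hbrk : 0 < ρ * (S * (1 + ρ) - 2 * ρ) - x * (S * (1 + ρ) + 2 * ρ) := by linarith
  have hf : 0 < x * (ρ * (S * (1 + ρ) - 2 * ρ) - x * (S * (1 + ρ) + 2 * ρ)) :=
    mul_pos hx0 hbrk
  nlinarith [mul_pos (mul_pos (mul_pos (by positivity : (0:ℝ) < 2 * (1 - ρ) ^ 3) h1mx) hx0) hbrk]
end

section
/- If S > 2ρ/(1+ρ), then for every x with λ* < x ≤ ρ one has W_G(x) < W_M(x): the gated system yields strictly smaller mean low-priority waiting time than the mixed gated/exhaustive system whenever the high-priority occupation rate exceeds λ*. -/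
/-- if S > 2ρ/(1+ρ), then W_G(x) < W_M(x) for all λ* < x ≤ ρ. -/
theorem WG_lt_WM_above_lambda_star (ρ S : ℝ) (hρ0 : 0 < ρ) (hρ1 : ρ < 1) (hS : 0 < S)
    (h : S > 2 * ρ / (1 + ρ)) :
    ∀ x : ℝ, ρ * (S - 2 * ρ / (1 + ρ)) / (S + 2 * ρ / (1 + ρ)) < x → x ≤ ρ →
      WG ρ S x < WM ρ S x := by
  intro x hlam hxρ
  have h1p : (0:ℝ) < 1 + ρ := by linarith
  have h1m : (0:ℝ) < 1 - ρ := by linarith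
  have h1x : (0:ℝ) < 1 - x := by linarith
  -- c = 2ρ/(1+ρ)
  have hc0 : (0:ℝ) < 2 * ρ / (1 + ρ) := by positivity
  have hSc : (0:ℝ) < S + 2 * ρ / (1 + ρ) := by linarith
  -- x > λ* > 0
  have hx0 : (0:ℝ) < x := by
    have : (0:ℝ) < ρ * (S - 2 * ρ / (1 + ρ)) / (S + 2 * ρ / (1 + ρ)) := by
      apply div_pos _ hSc
      have : (0:ℝ) < S - 2 * ρ / (1 + ρ) := by linarith
      positivity
    linarith
  -- from hlam: ρ(S - c) < x (S + c)
  have hkey : ρ * (S - 2 * ρ / (1 + ρ)) < x * (S + 2 * ρ / (1 + ρ)) := by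
    have := (div_lt_iff₀ hSc).mp hlam
    linarith
  -- clear the division by (1+ρ): ρ(S(1+ρ) - 2ρ) < x(S(1+ρ) + 2ρ)
  have hkey2 : ρ * (S * (1 + ρ) - 2 * ρ) < x * (S * (1 + ρ) + 2 * ρ) := by
    have h2 := mul_lt_mul_of_pos_right hkey h1p
    have e1 : ρ * (S - 2 * ρ / (1 + ρ)) * (1 + ρ) = ρ * (S * (1 + ρ) - 2 * ρ) := by
      field_simp
    have e2 : x * (S + 2 * ρ / (1 + ρ)) * (1 + ρ) = x * (S * (1 + ρ) + 2 * ρ) := by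
      field_simp
    rw [e1, e2] at h2
    exact h2
  have hdiff : WM ρ S x - WG ρ S x
      = x * (x * (S * (1 + ρ) + 2 * ρ) - S * ρ * (1 + ρ) + 2 * ρ ^ 2)
        / (2 * (1 - ρ) * (1 - x) * (1 + ρ)) := by
    unfold WM WG
    have h1 : (1 - ρ : ℝ) ≠ 0 := ne_of_gt h1m
    have h2 : (1 - x : ℝ) ≠ 0 := ne_of_gt h1x
    have h3 : (1 + ρ : ℝ) ≠ 0 := ne_of_gt h1p
    have h4 : (1 - ρ ^ 2 : ℝ) ≠ 0 := by
      have : (1 - ρ ^ 2 : ℝ) = (1 - ρ) * (1 + ρ) := by ring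
      rw [this]; exact mul_ne_zero h1 h3
    field_simp
    ring
  have hnum : 0 < x * (x * (S * (1 + ρ) + 2 * ρ) - S * ρ * (1 + ρ) + 2 * ρ ^ 2) := by
    apply mul_pos hx0
    nlinarith [hkey2]
  have : 0 < WM ρ S x - WG ρ S x := by
    rw [hdiff]
    positivity
  linarith
end

section
/- If 0 < S ≤ 2ρ/(1+ρ), then W_G(x) < W_M(x) for every x ∈ (0,ρ]: for small vacation length the gated system always performs strictly better than the mixed gated/exhaustive system for any positive high-priority arrival intensity. -/
/-! Over the common denominator `2(1-ρ)(1+ρ)(1-x)` the gap `W_M - W_G` has numerator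
`x((ρ - x)(2ρ - S(1+ρ)) + 4ρx)`, and `S ≤ 2ρ/(1+ρ)` says exactly `S(1+ρ) ≤ 2ρ`. -/

theorem WM_sub_WG {ρ S x : ℝ} (hρ₁ : 1 - ρ ≠ 0) (hρ₂ : 1 + ρ ≠ 0) (hx : 1 - x ≠ 0) :
    WM ρ S x - WG ρ S x =
      x * ((ρ - x) * (2 * ρ - S * (1 + ρ)) + 4 * ρ * x) / (2 * (1 - ρ) * (1 + ρ) * (1 - x)) := by
  rw [WM, WG, show 1 - ρ ^ 2 = (1 - ρ) * (1 + ρ) by ring]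
  field_simp
  ring

theorem WG_lt_WM_small_S_general (ρ S : ℝ) (hρ1 : ρ < 1)
    (hS2 : S ≤ 2 * ρ / (1 + ρ)) :
    ∀ x : ℝ, 0 < x → x ≤ ρ → WG ρ S x < WM ρ S x := by
  intro x hx hxρ
  have hρ0 : 0 < ρ := hx.trans_le hxρ
  have hρ₁ : 0 < 1 - ρ := sub_pos.mpr hρ1
  have hρ₂ : 0 < 1 + ρ := by linarith
  have hx₁ : 0 < 1 - x := by linarith
  have hS : S * (1 + ρ) ≤ 2 * ρ := (le_div_iff₀ hρ₂).mp hS2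
  have hnum : 0 < (ρ - x) * (2 * ρ - S * (1 + ρ)) + 4 * ρ * x :=
    add_pos_of_nonneg_of_pos (mul_nonneg (sub_nonneg.mpr hxρ) (sub_nonneg.mpr hS)) (by positivity)
  rw [← sub_pos, WM_sub_WG hρ₁.ne' hρ₂.ne' hx₁.ne']
  positivity

/-- if 0 < S ≤ 2ρ/(1+ρ), then W_G(x) < W_M(x) for all x ∈ (0,ρ]. -/
theorem WG_lt_WM_small_S (ρ S : ℝ) (hρ0 : 0 < ρ) (hρ1 : ρ < 1)
    (hS : 0 < S) (hS2 : S ≤ 2 * ρ / (1 + ρ)) :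
    ∀ x : ℝ, 0 < x → x ≤ ρ → WG ρ S x < WM ρ S x :=
  WG_lt_WM_small_S_general ρ S hρ1 hS2
end
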